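/- Duality of anti-hook symbols under S̃: for indices k = (k₁,…,k_r), l = (l₁,…,l_s) and positive integer a, S̃([k // l; a]) = (−1)^{r+s+1} [l // k; a] in ℐ, where S̃([m]) = (−1)^{dep m}[m]^⋆. -/

import Mathlib

/-- An index: a finite sequence of positive integers. -/
abbrev Idx := List ℕ+

/-- The `ℚ`-linear space `ℐ` spanned by formal symbols of indices. -/
abbrev IdxAlg := Idx →₀ ℚ

/-- Auxiliary harmonic product on indices *stored in reversed order*, so that the
recursion acts on the last components of the original indices, as in the paper:
`[k,k]∗[l,l] = [([k,k]∗[l]),l] + [([k]∗[l,l]),k] + [([k]∗[l]),k+l]`. -/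
noncomputable def hpAux : Idx → Idx → IdxAlg
  | [], l => Finsupp.single l 1
  | a :: as, [] => Finsupp.single (a :: as) 1
  | a :: as, b :: bs =>
      Finsupp.mapDomain (a :: ·) (hpAux as (b :: bs)) +
      Finsupp.mapDomain (b :: ·) (hpAux (a :: as) bs) +
      Finsupp.mapDomain ((a + b) :: ·) (hpAux as bs)
termination_by k l => k.length + l.length

/-- The harmonic (stuffle) product of two index symbols. -/
noncomputable def hp (k l : Idx) : IdxAlg :=
  Finsupp.mapDomain List.reverse (hpAux k.reverse l.reverse)

/-- The bilinear extension of the harmonic product to `ℐ`. -/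
noncomputable def hmul (u v : IdxAlg) : IdxAlg :=
  u.sum fun k ck => v.sum fun l cl => (ck * cl) • hp k l

/-- The star-sum `[l₁,…,l_s]^⋆`: the sum of all `[l₁□⋯□l_s]` with each `□` replaced by
`+` or `,`. -/
noncomputable def starSym : Idx → IdxAlg
  | [] => Finsupp.single [] 1
  | [a] => Finsupp.single [a] 1
  | a :: b :: rest =>
      Finsupp.mapDomain (a :: ·) (starSym (b :: rest)) + starSym ((a + b) :: rest)
termination_by l => l.length

/-- The linear map `S̃ : ℐ → ℐ` with `S̃([k]) = (−1)^{dep k}[k]^⋆`. -/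
noncomputable def Stilde (u : IdxAlg) : IdxAlg :=
  u.sum fun k c => ((-1 : ℚ) ^ k.length * c) • starSym k

/-- The defining properties of the anti-hook symbols `[k // l; a] ∈ ℐ`:
(1) `[(k)//∅; a] = [k,a]` and `[∅//(l); a] = [l,a]^⋆`;
(2) `[(k₁,…,k_{r−1})//(l); k_r] + [(k)//(l₁,…,l_{s−1}); l_s] = [k₁,…,k_r] ∗ [l₁,…,l_s]^⋆`
for nonempty `k`, `l`. -/
def IsAntiHook (AH : Idx → Idx → ℕ+ → IdxAlg) : Prop :=
  (∀ (k : Idx) (a : ℕ+), AH k [] a = Finsupp.single (k ++ [a]) 1) ∧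
  (∀ (l : Idx) (a : ℕ+), AH [] l a = starSym (l ++ [a])) ∧
  (∀ (k l : Idx) (a b : ℕ+),
    AH k (l ++ [b]) a + AH (k ++ [a]) l b =
      hmul (Finsupp.single (k ++ [a]) 1) (starSym (l ++ [b])))

/-!
Write `starCons a = prepend a + addHead a`, so that `[a, k]^⋆ = starCons a [k]^⋆`. Then
`S̃ ∘ prepend a = -starCons a ∘ S̃`, and products of `starCons`-images obey the stuffle recursion
of `prepend`-images with the sign of the last term flipped. Induction on depth turns the
recursion `[a,k] ∗ [b,l] = [a,(k ∗ [b,l])] + [b,([a,k] ∗ l)] + [a+b,(k ∗ l)]` into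
`S̃(u ∗ v) = S̃u ∗ S̃v`; similarly `S̃([m]^⋆) = (-1)^{dep m} [m]`. Applying `S̃` to the defining
relation `[k//l,b;a] = [k,a] ∗ [l,b]^⋆ - [k,a//l;b]` and inducting on `l` then produces the same
relation with `k` and `l` exchanged, which is the claimed duality.
-/

open Finsupp

noncomputable def prepend (a : ℕ+) : IdxAlg →ₗ[ℚ] IdxAlg := lmapDomain ℚ ℚ (a :: ·)

noncomputable def appendLetter (a : ℕ+) : IdxAlg →ₗ[ℚ] IdxAlg := lmapDomain ℚ ℚ (· ++ [a])

/-- Vanishing on `[]` makes `starSym (a :: k) = starCons a (starSym k)` hold also for `k = []`. -/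
noncomputable def addHead (a : ℕ+) : IdxAlg →ₗ[ℚ] IdxAlg :=
  linearCombination ℚ fun
    | [] => 0
    | c :: t => single ((a + c) :: t) 1

noncomputable def starCons (a : ℕ+) : IdxAlg →ₗ[ℚ] IdxAlg := prepend a + addHead a

@[simp] lemma prepend_single (a : ℕ+) (m : Idx) (c : ℚ) :
    prepend a (single m c) = single (a :: m) c := by
  simp [prepend]

@[simp] lemma appendLetter_single (a : ℕ+) (m : Idx) (c : ℚ) :
    appendLetter a (single m c) = single (m ++ [a]) c := by
  simp [appendLetter]

@[simp] lemma addHead_single_nil (a : ℕ+) (c : ℚ) : addHead a (single [] c) = 0 := by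
  simp [addHead]

@[simp] lemma addHead_single_cons (a c : ℕ+) (t : Idx) (d : ℚ) :
    addHead a (single (c :: t) d) = single ((a + c) :: t) d := by
  simp [addHead]

theorem IdxAlg.induction_prepend {motive : IdxAlg → Prop} (u : IdxAlg)
    (add : ∀ u v, motive u → motive v → motive (u + v))
    (nil : ∀ d : ℚ, motive (single [] d)) (cons : ∀ c s, motive (prepend c s)) : motive u := by
  induction u using Finsupp.induction_linear with
  | zero => simpa using nil 0
  | add u v hu hv => exact add u v hu hv
  | single m d =>
    cases m with
    | nil => exact nil d
    | cons c t => simpa using cons c (single t d)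

lemma addHead_prepend (a c : ℕ+) (u : IdxAlg) : addHead a (prepend c u) = prepend (a + c) u := by
  induction u using Finsupp.induction_linear <;> simp_all

lemma addHead_addHead (a b : ℕ+) (u : IdxAlg) : addHead a (addHead b u) = addHead (a + b) u := by
  induction u using IdxAlg.induction_prepend <;> simp_all [addHead_prepend, add_assoc]

lemma addHead_starCons (a c : ℕ+) (u : IdxAlg) : addHead a (starCons c u) = starCons (a + c) u := by
  simp [starCons, addHead_prepend, addHead_addHead]

lemma appendLetter_prepend (a b : ℕ+) (u : IdxAlg) :
    appendLetter a (prepend b u) = prepend b (appendLetter a u) := by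
  induction u using Finsupp.induction_linear <;> simp_all

lemma mapDomain_reverse_appendLetter (a : ℕ+) (u : IdxAlg) :
    mapDomain List.reverse (appendLetter a u) = prepend a (mapDomain List.reverse u) := by
  induction u using Finsupp.induction_linear <;> simp_all [mapDomain_add]

lemma hpAux_nil_left (l : Idx) : hpAux [] l = single l 1 := by
  rw [hpAux]

lemma hpAux_nil_right (k : Idx) : hpAux k [] = single k 1 := by
  cases k <;> rw [hpAux]

lemma hpAux_cons_cons (a b : ℕ+) (as bs : Idx) :
    hpAux (a :: as) (b :: bs) =
      prepend a (hpAux as (b :: bs)) + prepend b (hpAux (a :: as) bs) +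
        prepend (a + b) (hpAux as bs) := by
  rw [hpAux]; rfl

/-- Since `hp` reverses its arguments, this last-letter recursion is what yields `hp_cons_cons`. -/
theorem hpAux_append (a b : ℕ+) : ∀ k l : Idx,
    hpAux (k ++ [a]) (l ++ [b]) =
      appendLetter b (hpAux (k ++ [a]) l) + appendLetter a (hpAux k (l ++ [b])) +
        appendLetter (a + b) (hpAux k l)
  | [], [] => by
    simp [hpAux_cons_cons, hpAux_nil_left, hpAux_nil_right]
  | [], d :: l => by
    have ih := hpAux_append a b [] l
    simp only [List.nil_append, List.cons_append] at ih ⊢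
    simp only [hpAux_cons_cons, ih, hpAux_nil_left, map_add, appendLetter_single,
      prepend_single, appendLetter_prepend, List.cons_append]
    abel
  | c :: k, [] => by
    have ih := hpAux_append a b k []
    simp only [List.nil_append, List.cons_append] at ih ⊢
    simp only [hpAux_cons_cons, ih, hpAux_nil_right, map_add, appendLetter_single,
      prepend_single, appendLetter_prepend, List.cons_append]
    abel
  | c :: k, d :: l => by
    have ih₁ := hpAux_append a b k (d :: l)
    have ih₂ := hpAux_append a b (c :: k) l
    have ih₃ := hpAux_append a b k l
    simp only [List.cons_append] at ih₁ ih₂ ih₃ ⊢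
    simp only [hpAux_cons_cons, ih₁, ih₂, ih₃, map_add, appendLetter_prepend]
    abel
termination_by k l => k.length + l.length

lemma hp_nil_left (l : Idx) : hp [] l = single l 1 := by
  simp [hp, hpAux_nil_left]

lemma hp_nil_right (k : Idx) : hp k [] = single k 1 := by
  simp [hp, hpAux_nil_right]

lemma hp_cons_cons (a b : ℕ+) (as bs : Idx) :
    hp (a :: as) (b :: bs) =
      prepend a (hp as (b :: bs)) + prepend b (hp (a :: as) bs) + prepend (a + b) (hp as bs) := by
  simp only [hp, List.reverse_cons, hpAux_append, mapDomain_add, mapDomain_reverse_appendLetter]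
  abel

theorem hp_comm : ∀ k l : Idx, hp k l = hp l k
  | [], l => by rw [hp_nil_left, hp_nil_right]
  | a :: as, [] => by rw [hp_nil_left, hp_nil_right]
  | a :: as, b :: bs => by
    rw [hp_cons_cons, hp_cons_cons, hp_comm as, hp_comm (a :: as), hp_comm as, add_comm a b]
    abel
termination_by k l => k.length + l.length

noncomputable def hmulBilin : IdxAlg →ₗ[ℚ] IdxAlg →ₗ[ℚ] IdxAlg :=
  linearCombination ℚ fun k => linearCombination ℚ (hp k)

lemma hmul_eq_hmulBilin (u v : IdxAlg) : hmul u v = hmulBilin u v := by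
  simp [hmul, hmulBilin, linearCombination_apply, Finsupp.sum, Finset.smul_sum, mul_smul]

lemma hmul_add_left (u v w : IdxAlg) : hmul (u + v) w = hmul u w + hmul v w := by
  simp [hmul_eq_hmulBilin]

lemma hmul_add_right (u v w : IdxAlg) : hmul u (v + w) = hmul u v + hmul u w := by
  simp [hmul_eq_hmulBilin]

lemma hmul_smul_left (c : ℚ) (u v : IdxAlg) : hmul (c • u) v = c • hmul u v := by
  simp [hmul_eq_hmulBilin]

lemma hmul_smul_right (c : ℚ) (u v : IdxAlg) : hmul u (c • v) = c • hmul u v := by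
  simp [hmul_eq_hmulBilin]

lemma hmul_neg_left (u v : IdxAlg) : hmul (-u) v = -hmul u v := by
  simp [hmul_eq_hmulBilin]

lemma hmul_neg_right (u v : IdxAlg) : hmul u (-v) = -hmul u v := by
  simp [hmul_eq_hmulBilin]

@[simp] lemma hmul_zero_left (v : IdxAlg) : hmul 0 v = 0 := by
  simp [hmul_eq_hmulBilin]

@[simp] lemma hmul_zero_right (u : IdxAlg) : hmul u 0 = 0 := by
  simp [hmul_eq_hmulBilin]

lemma hmul_single_single (k l : Idx) (c d : ℚ) :
    hmul (single k c) (single l d) = (c * d) • hp k l := by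
  simp [hmul_eq_hmulBilin, hmulBilin, mul_smul]

lemma hmul_comm (u v : IdxAlg) : hmul u v = hmul v u := by
  rw [hmul, hmul, Finsupp.sum_comm]
  exact Finsupp.sum_congr fun k _ => Finsupp.sum_congr fun l _ => by rw [hp_comm, mul_comm]

lemma hmul_single_nil_left (c : ℚ) (v : IdxAlg) : hmul (single [] c) v = c • v := by
  induction v using Finsupp.induction_linear with
  | zero => simp
  | add v w hv hw => rw [hmul_add_right, hv, hw, smul_add]
  | single l d => simp [hmul_single_single, hp_nil_left, mul_smul]

lemma hmul_single_nil_right (c : ℚ) (u : IdxAlg) : hmul u (single [] c) = c • u := by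
  rw [hmul_comm, hmul_single_nil_left]

lemma hmul_prepend_prepend (a b : ℕ+) (u v : IdxAlg) :
    hmul (prepend a u) (prepend b v) =
      prepend a (hmul u (prepend b v)) + prepend b (hmul (prepend a u) v) +
        prepend (a + b) (hmul u v) := by
  induction u using Finsupp.induction_linear with
  | zero => simp
  | add u₁ u₂ h₁ h₂ => simp only [map_add, hmul_add_left, h₁, h₂]; abel
  | single k c =>
    induction v using Finsupp.induction_linear with
    | zero => simp
    | add v₁ v₂ h₁ h₂ => simp only [map_add, hmul_add_right, h₁, h₂]; abel
    | single l d =>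
      simp only [prepend_single, hmul_single_single, hp_cons_cons, smul_add, map_smul]

lemma hmul_addHead_prepend (a b : ℕ+) (u v : IdxAlg) :
    hmul (addHead a u) (prepend b v) =
      addHead a (hmul u (prepend b v)) + prepend b (hmul (addHead a u) v) -
        prepend (a + b) (hmul u v) := by
  induction u using IdxAlg.induction_prepend with
  | add u₁ u₂ h₁ h₂ => simp only [map_add, hmul_add_left, h₁, h₂]; abel
  | nil d => simp [hmul_single_nil_left, addHead_prepend]
  | cons c s =>
    simp only [addHead_prepend, hmul_prepend_prepend, map_add, add_assoc]
    abel

lemma hmul_prepend_addHead (a b : ℕ+) (u v : IdxAlg) :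
    hmul (prepend a u) (addHead b v) =
      prepend a (hmul u (addHead b v)) + addHead b (hmul (prepend a u) v) -
        prepend (a + b) (hmul u v) := by
  rw [hmul_comm, hmul_addHead_prepend, hmul_comm v, hmul_comm v, hmul_comm (addHead b v),
    add_comm b a]
  abel

lemma hmul_addHead_addHead (a b : ℕ+) (u v : IdxAlg) :
    hmul (addHead a u) (addHead b v) =
      addHead a (hmul u (addHead b v)) + addHead b (hmul (addHead a u) v) -
        addHead (a + b) (hmul u v) := by
  induction u using IdxAlg.induction_prepend with
  | add u₁ u₂ h₁ h₂ => simp only [map_add, hmul_add_left, h₁, h₂]; abel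
  | nil d => simp [hmul_single_nil_left, addHead_addHead]
  | cons c s =>
    induction v using IdxAlg.induction_prepend with
    | add v₁ v₂ h₁ h₂ => simp only [map_add, hmul_add_right, h₁, h₂]; abel
    | nil d => simp [hmul_single_nil_right, addHead_addHead, add_comm]
    | cons d t =>
      simp only [addHead_prepend, hmul_prepend_prepend, map_add]
      ac_nf
      abel

theorem hmul_starCons_starCons (a b : ℕ+) (u v : IdxAlg) :
    hmul (starCons a u) (starCons b v) =
      starCons a (hmul u (starCons b v)) + starCons b (hmul (starCons a u) v) -
        starCons (a + b) (hmul u v) := by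
  simp only [starCons, LinearMap.add_apply, hmul_add_left, hmul_add_right, hmul_prepend_prepend,
    hmul_addHead_prepend, hmul_prepend_addHead, hmul_addHead_addHead, map_add]
  abel

lemma starSym_nil : starSym [] = single [] 1 := by
  rw [starSym]

theorem starSym_cons (a : ℕ+) (k : Idx) : starSym (a :: k) = starCons a (starSym k) := by
  induction k generalizing a with
  | nil => simp [starSym, starCons]
  | cons b t ih =>
    rw [starSym, ih (a + b), ← addHead_starCons, ← ih b]
    rfl

lemma Stilde_eq_linearCombination (u : IdxAlg) :
    Stilde u = linearCombination ℚ (fun k => ((-1 : ℚ) ^ k.length) • starSym k) u := by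
  rw [Stilde, linearCombination_apply]
  exact Finsupp.sum_congr fun k _ => by rw [mul_smul, smul_comm]

lemma Stilde_add (u v : IdxAlg) : Stilde (u + v) = Stilde u + Stilde v := by
  simp [Stilde_eq_linearCombination]

lemma Stilde_sub (u v : IdxAlg) : Stilde (u - v) = Stilde u - Stilde v := by
  simp [Stilde_eq_linearCombination]

lemma Stilde_smul (c : ℚ) (u : IdxAlg) : Stilde (c • u) = c • Stilde u := by
  simp [Stilde_eq_linearCombination]

lemma Stilde_single (m : Idx) (c : ℚ) :
    Stilde (single m c) = ((-1 : ℚ) ^ m.length * c) • starSym m := by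
  simp [Stilde_eq_linearCombination, mul_smul, smul_comm c]

lemma Stilde_prepend (a : ℕ+) (u : IdxAlg) : Stilde (prepend a u) = -starCons a (Stilde u) := by
  induction u using Finsupp.induction_linear with
  | zero => simp [Stilde_eq_linearCombination]
  | add u v hu hv => rw [map_add, Stilde_add, hu, hv, Stilde_add, map_add, neg_add]
  | single m c =>
    rw [prepend_single, Stilde_single, Stilde_single, starSym_cons, map_smul, List.length_cons,
      pow_succ]
    module

lemma Stilde_addHead (a : ℕ+) (u : IdxAlg) : Stilde (addHead a u) = addHead a (Stilde u) := by
  induction u using IdxAlg.induction_prepend with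
  | add u v hu hv => rw [map_add, Stilde_add, hu, hv, Stilde_add, map_add]
  | nil d => simp [starSym_nil, Stilde_eq_linearCombination]
  | cons c s => rw [addHead_prepend, Stilde_prepend, Stilde_prepend, map_neg, addHead_starCons]

lemma Stilde_starCons (a : ℕ+) (u : IdxAlg) : Stilde (starCons a u) = -prepend a (Stilde u) := by
  rw [starCons, LinearMap.add_apply, Stilde_add, Stilde_prepend, Stilde_addHead, starCons,
    LinearMap.add_apply]
  abel

theorem Stilde_starSym (m : Idx) : Stilde (starSym m) = ((-1 : ℚ) ^ m.length) • single m 1 := by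
  induction m with
  | nil => simp [starSym_nil, Stilde_single]
  | cons a m ih =>
    rw [starSym_cons, Stilde_starCons, ih, map_smul, prepend_single, List.length_cons, pow_succ]
    module

theorem Stilde_hp (k l : Idx) :
    Stilde (hp k l) = hmul (Stilde (single k 1)) (Stilde (single l 1)) := by
  have single_cons (a : ℕ+) (m : Idx) :
      Stilde (single (a :: m) 1) = -starCons a (Stilde (single m 1)) := by
    rw [← prepend_single, Stilde_prepend]
  induction k generalizing l with
  | nil => simp [hp_nil_left, Stilde_single, starSym_nil, hmul_single_nil_left]
  | cons a as ihk =>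
    induction l with
    | nil => simp [hp_nil_right, Stilde_single, starSym_nil, hmul_single_nil_right]
    | cons b bs ihl =>
      rw [hp_cons_cons, Stilde_add, Stilde_add, Stilde_prepend, Stilde_prepend, Stilde_prepend,
        ihk, ihl, ihk]
      simp only [single_cons, hmul_neg_left, hmul_neg_right, map_neg, hmul_starCons_starCons]
      abel

theorem Stilde_hmul (u v : IdxAlg) : Stilde (hmul u v) = hmul (Stilde u) (Stilde v) := by
  induction u using Finsupp.induction_linear with
  | zero => simp [Stilde_eq_linearCombination]
  | add u₁ u₂ h₁ h₂ => rw [hmul_add_left, Stilde_add, h₁, h₂, Stilde_add, hmul_add_left]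
  | single k c =>
    induction v using Finsupp.induction_linear with
    | zero => simp [Stilde_eq_linearCombination]
    | add v₁ v₂ h₁ h₂ => rw [hmul_add_right, Stilde_add, h₁, h₂, Stilde_add, hmul_add_right]
    | single l d =>
      rw [hmul_single_single, Stilde_smul, Stilde_hp, ← smul_single_one k c,
        ← smul_single_one l d, Stilde_smul, Stilde_smul, hmul_smul_left, hmul_smul_right, smul_smul]

/-- Duality of anti-hook symbols under `S̃`: for indices `k = (k₁,…,k_r)`, `l = (l₁,…,l_s)`
and a positive integer `a`, `S̃([k // l; a]) = (−1)^{r+s+1} [l // k; a]` in `ℐ`. -/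
theorem Stilde_antiHook (AH : Idx → Idx → ℕ+ → IdxAlg) (hAH : IsAntiHook AH)
    (k l : Idx) (a : ℕ+) :
    Stilde (AH k l a) = ((-1 : ℚ) ^ (k.length + l.length + 1)) • AH l k a := by
  obtain ⟨concat_nil, nil_concat, split⟩ := hAH
  induction l using List.reverseRecOn generalizing k a with
  | nil => simp [concat_nil, nil_concat, Stilde_single]
  | append_singleton l b ih =>
    rw [eq_sub_of_add_eq (split k l a b), Stilde_sub, Stilde_hmul, Stilde_single, Stilde_starSym,
      ih, hmul_smul_left, hmul_smul_right, hmul_comm, ← split l k b a]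
    simp only [List.length_append, List.length_singleton]
    module
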